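/- arXiv:1602.05646 — 2 statements merged into one kernel-verified Lean document; each statement's English description precedes it below -/
import Mathlib

section
/- Let E be a directed graph and H a hereditary subset of E^0. Define Λ_0(H) = H and Λ_n(H) = {y ∈ E^0 : s^{-1}(y) ≠ ∅ and r(s^{-1}(y)) ⊆ Λ_{n-1}(H)} ∪ Λ_{n-1}(H). Then the union ⋃_{n≥0} Λ_n(H) is the smallest hereditary and saturated subset of E^0 containing H. -/
/-- A subset `H` of the vertices of a directed graph `(V, E, s, r)` is hereditary if
every edge with source in `H` has range in `H`. -/
def GraphHereditary {V E : Type*} (s r : E → V) (H : Set V) : Prop :=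
  ∀ e : E, s e ∈ H → r e ∈ H

/-- A subset `X` of the vertices is saturated if every vertex which is not a sink and all of
whose emitted edges have range in `X` belongs to `X`. -/
def GraphSaturated {V E : Type*} (s r : E → V) (X : Set V) : Prop :=
  ∀ v : V, (∃ e, s e = v) → (∀ e, s e = v → r e ∈ X) → v ∈ X

/-- The iterated saturation `Λ_n(H)` of a set of vertices `H`. -/
def Lambda {V E : Type*} (s r : E → V) (H : Set V) : ℕ → Set V
  | 0 => H
  | n + 1 =>
      {y : V | (∃ e, s e = y) ∧ ∀ e, s e = y → r e ∈ Lambda s r H n} ∪ Lambda s r H n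


lemma Lambda_mono {V E : Type*} (s r : E → V) (H : Set V) :
    Monotone (Lambda s r H) := by
  apply monotone_nat_of_le_succ
  intro n
  intro v hv
  exact Or.inr hv

lemma Lambda_hered {V E : Type*} (s r : E → V) (H : Set V)
    (hH : GraphHereditary s r H) (n : ℕ) : GraphHereditary s r (Lambda s r H n) := by
  induction n with
  | zero => exact hH
  | succ n ih =>
    intro e he
    rcases he with ⟨_, h2⟩ | h
    · exact Or.inr (h2 e rfl)
    · exact Or.inr (ih e h)

/-- Let `E` be a (row-finite) directed graph and `H` a hereditary subset of
`E^0`.  With `Λ_0(H) = H` and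
`Λ_n(H) = {y : s⁻¹(y) ≠ ∅, r(s⁻¹(y)) ⊆ Λ_{n-1}(H)} ∪ Λ_{n-1}(H)`, the union
`⋃_n Λ_n(H)` is the smallest hereditary and saturated subset of `E^0` containing `H`. -/
theorem stmt10 {V E : Type*} (s r : E → V) (hrow : ∀ v : V, (s ⁻¹' {v}).Finite)
    (H : Set V) (hH : GraphHereditary s r H) :
    GraphHereditary s r (⋃ n, Lambda s r H n) ∧
    GraphSaturated s r (⋃ n, Lambda s r H n) ∧
    H ⊆ ⋃ n, Lambda s r H n ∧
    ∀ X : Set V, GraphHereditary s r X → GraphSaturated s r X → H ⊆ X →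
      (⋃ n, Lambda s r H n) ⊆ X := by
  refine ⟨?_, ?_, ?_, ?_⟩
  · intro e he
    rcases Set.mem_iUnion.1 he with ⟨n, hn⟩
    exact Set.mem_iUnion.2 ⟨n, Lambda_hered s r H hH n e hn⟩
  · intro v hv hall
    have hfin := hrow v
    have : ∀ e : (s ⁻¹' {v}), ∃ n, r e.1 ∈ Lambda s r H n := by
      intro e
      exact Set.mem_iUnion.1 (hall e.1 e.2)
    choose f hf using this
    haveI := hfin.fintype
    obtain ⟨N, hN⟩ : ∃ N, ∀ e : (s ⁻¹' {v}), f e ≤ N := by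
      rcases isEmpty_or_nonempty (s ⁻¹' {v} : Set E) with h | h
      · exact ⟨0, fun e => (h.false e).elim⟩
      · exact ⟨Finset.univ.sup f, fun e => Finset.le_sup (Finset.mem_univ e)⟩
    refine Set.mem_iUnion.2 ⟨N + 1, Or.inl ⟨hv, fun e he => ?_⟩⟩
    exact Lambda_mono s r H (hN ⟨e, he⟩) (hf ⟨e, he⟩)
  · exact Set.subset_iUnion (Lambda s r H) 0
  · intro X hX hsat hHX
    have key : ∀ n, Lambda s r H n ⊆ X := by
      intro n
      induction n with
      | zero => exact hHX
      | succ n ih =>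
        intro v hn
        rcases hn with ⟨h1, h2⟩ | h
        · exact hsat v h1 (fun e he => ih (h2 e he))
        · exact ih h
    exact Set.iUnion_subset key
end

section
/- Let A be a unital ring and e ∈ A an idempotent. The assignment S ↦ eS gives a bijection between isomorphism classes of simple left A-modules with eS ≠ 0 and isomorphism classes of simple left eAe-modules. -/
/-- The corner ring `eAe`, realized as the set of elements fixed by left and right
multiplication by the idempotent `e`. -/
def Corner {A : Type*} [Ring A] (e : A) (_he : e * e = e) : Type _ :=
  {x : A // e * x = x ∧ x * e = x}

namespace Corner

variable {A : Type*} [Ring A] {e : A} {he : e * e = e}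

instance : Add (Corner e he) :=
  ⟨fun x y => ⟨x.1 + y.1, by rw [mul_add, x.2.1, y.2.1], by rw [add_mul, x.2.2, y.2.2]⟩⟩
instance : Zero (Corner e he) := ⟨⟨0, by simp, by simp⟩⟩
instance : Neg (Corner e he) :=
  ⟨fun x => ⟨-x.1, by rw [mul_neg, x.2.1], by rw [neg_mul, x.2.2]⟩⟩
instance : Mul (Corner e he) :=
  ⟨fun x y => ⟨x.1 * y.1, by rw [← mul_assoc, x.2.1], by rw [mul_assoc, y.2.2]⟩⟩
instance : One (Corner e he) := ⟨⟨e, he, he⟩⟩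

instance : Ring (Corner e he) where
  add_assoc a b c := Subtype.ext (add_assoc a.1 b.1 c.1)
  zero_add a := Subtype.ext (zero_add a.1)
  add_zero a := Subtype.ext (add_zero a.1)
  add_comm a b := Subtype.ext (add_comm a.1 b.1)
  neg_add_cancel a := Subtype.ext (neg_add_cancel a.1)
  mul_assoc a b c := Subtype.ext (mul_assoc a.1 b.1 c.1)
  one_mul a := Subtype.ext a.2.1
  mul_one a := Subtype.ext a.2.2
  left_distrib a b c := Subtype.ext (left_distrib a.1 b.1 c.1)
  right_distrib a b c := Subtype.ext (right_distrib a.1 b.1 c.1)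
  zero_mul a := Subtype.ext (zero_mul a.1)
  mul_zero a := Subtype.ext (mul_zero a.1)
  nsmul := nsmulRec
  zsmul := zsmulRec

@[simp] theorem one_val : (1 : Corner e he).1 = e := rfl
@[simp] theorem mul_val (x y : Corner e he) : (x * y : Corner e he).1 = x.1 * y.1 := rfl
@[simp] theorem add_val (x y : Corner e he) : (x + y : Corner e he).1 = x.1 + y.1 := rfl

end Corner

/-- For a left `A`-module `M`, the abelian group `eM = {e • m : m ∈ M}`, realized as the
set of elements fixed by the action of the idempotent `e`. -/
def eMod {A : Type*} [Ring A] (e : A) (_he : e * e = e) (M : Type*) [AddCommGroup M]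
    [Module A M] : Type _ := {m : M // e • m = m}

namespace eMod

variable {A : Type*} [Ring A] {e : A} {he : e * e = e} {M : Type*} [AddCommGroup M] [Module A M]

instance : Add (eMod e he M) := ⟨fun x y => ⟨x.1 + y.1, by rw [smul_add, x.2, y.2]⟩⟩
instance : Zero (eMod e he M) := ⟨⟨0, by simp⟩⟩
instance : Neg (eMod e he M) := ⟨fun x => ⟨-x.1, by rw [smul_neg, x.2]⟩⟩

instance : AddCommGroup (eMod e he M) where
  add_assoc a b c := Subtype.ext (add_assoc a.1 b.1 c.1)
  zero_add a := Subtype.ext (zero_add a.1)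
  add_zero a := Subtype.ext (add_zero a.1)
  add_comm a b := Subtype.ext (add_comm a.1 b.1)
  neg_add_cancel a := Subtype.ext (neg_add_cancel a.1)
  nsmul := nsmulRec
  zsmul := zsmulRec

instance : SMul (Corner e he) (eMod e he M) :=
  ⟨fun c m => ⟨c.1 • m.1, by rw [← mul_smul, c.2.1]⟩⟩

/-- `eM` is a left module over the corner ring `eAe`. -/
instance : Module (Corner e he) (eMod e he M) where
  one_smul m := Subtype.ext m.2
  mul_smul c d m := Subtype.ext (mul_smul c.1 d.1 m.1)
  smul_add c m n := Subtype.ext (smul_add c.1 m.1 n.1)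
  add_smul c d m := Subtype.ext (add_smul c.1 d.1 m.1)
  zero_smul m := Subtype.ext (zero_smul A m.1)
  smul_zero c := Subtype.ext (smul_zero (c.1 : A))

@[simp] theorem smul_val (c : Corner e he) (m : eMod e he M) :
    (c • m : eMod e he M).1 = c.1 • m.1 := rfl

end eMod

/-- A simple left `A`-module `S` with `eS ≠ 0` realizing a given `eAe`-module `T` as
`eS ≅ T`. -/
structure SimpleModuleRep (A : Type u) [Ring A] (e : A) (he : e * e = e)
    (T : Type u) [AddCommGroup T] [Module (Corner e he) T] : Type (u + 1) where
  S : Type u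
  [instAddCommGroup : AddCommGroup S]
  [instModule : Module A S]
  simple : IsSimpleModule A S
  nonzero : ∃ m : S, e • m ≠ 0
  iso : Nonempty (eMod e he S ≃ₗ[Corner e he] T)

/-!
If `m ≠ 0` lies in `eS`, every `y ∈ eS` is `a • m = (eae) • m`, so `eS` is simple, and
`S ≅ A ⧸ ann m`. An `eAe`-isomorphism `eS ≅ eS'` preserves these annihilators: if
`b • m' ≠ 0`, simplicity gives `c` with `c b m' = m'`, so the corner element `ecbe` fixes
`m'`, whereas it kills `m` when `b • m = 0`. Conversely a simple `eAe`-module `T ∋ t ≠ 0`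
is `eS` for `S = A ⧸ P`, with `P` the annihilator of the functional `eb ↦ (ebe) • t` on
`eA`; this `S` is the simple quotient of `Ae ⊗_{eAe} T`.
-/

open LinearMap

theorem IsSimpleModule.nonempty_linearEquiv_of_ker_toSpanSingleton_eq {R M N : Type*}
    [Ring R] [AddCommGroup M] [Module R M] [AddCommGroup N] [Module R N]
    [IsSimpleModule R M] [IsSimpleModule R N] {x : M} {y : N} (hx : x ≠ 0) (hy : y ≠ 0)
    (h : ker (toSpanSingleton R M x) = ker (toSpanSingleton R N y)) :
    Nonempty (M ≃ₗ[R] N) :=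
  ⟨(quotKerEquivOfSurjective _ (toSpanSingleton_surjective R hx)).symm ≪≫ₗ
    Submodule.quotEquivOfEq _ _ h ≪≫ₗ
    quotKerEquivOfSurjective _ (toSpanSingleton_surjective R hy)⟩

namespace Corner

variable {A : Type*} [Ring A] {e : A} {he : e * e = e}

variable (e he) in
def compress : A →+ Corner e he where
  toFun a := ⟨e * a * e, by rw [← mul_assoc, ← mul_assoc, he], by rw [mul_assoc, he]⟩
  map_zero' := Subtype.ext (by simp only [mul_zero, zero_mul]; rfl)
  map_add' a b := Subtype.ext (by simp only [mul_add, add_mul]; rfl)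

@[simp] theorem compress_val (a : A) : (compress e he a).1 = e * a * e := rfl

theorem compress_mul_val (a : A) (w : Corner e he) :
    compress e he (a * w.1) = compress e he a * w :=
  Subtype.ext (by simp only [compress_val, mul_val, mul_assoc, w.2.1, w.2.2])

theorem compress_val_eq (w : Corner e he) : compress e he w.1 = w :=
  Subtype.ext (by rw [compress_val, w.2.1, w.2.2])

end Corner

namespace eMod

open Corner

variable {A : Type*} [Ring A] {e : A} {he : e * e = e}
variable {M N : Type*} [AddCommGroup M] [Module A M] [AddCommGroup N] [Module A N]

variable (e he) in
def proj (m : M) : eMod e he M := ⟨e • m, by rw [← mul_smul, he]⟩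

@[simp] theorem proj_val (m : M) : (proj e he m).1 = e • m := rfl

theorem proj_ne_zero {m : M} (hm : e • m ≠ 0) : proj e he m ≠ 0 :=
  fun h => hm (congrArg Subtype.val h)

theorem val_ne_zero {m : eMod e he M} (hm : m ≠ 0) : m.1 ≠ 0 :=
  fun h => hm (Subtype.ext h)

theorem compress_smul_val (a : A) (m : eMod e he M) :
    (compress e he a • m).1 = e • a • m.1 := by
  rw [smul_val, compress_val, mul_smul, mul_smul, m.2]

theorem isSimpleModule [IsSimpleModule A M] (hM : ∃ m : M, e • m ≠ 0) :
    IsSimpleModule (Corner e he) (eMod e he M) := by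
  obtain ⟨m, hm⟩ := hM
  refine isSimpleModule_iff_toSpanSingleton_surjective.mpr ⟨⟨_, 0, proj_ne_zero hm⟩, ?_⟩
  intro x hx y
  obtain ⟨a, ha⟩ := IsSimpleModule.toSpanSingleton_surjective A (val_ne_zero hx) y.1
  rw [toSpanSingleton_apply] at ha
  refine ⟨compress e he a, Subtype.ext ?_⟩
  rw [toSpanSingleton_apply, compress_smul_val, ha, y.2]

theorem ker_toSpanSingleton_le [IsSimpleModule A N]
    (g : eMod e he M →ₗ[Corner e he] eMod e he N) {x : eMod e he M} (hx : g x ≠ 0) :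
    ker (toSpanSingleton A M x.1) ≤ ker (toSpanSingleton A N (g x).1) := by
  intro b hb
  rw [mem_ker, toSpanSingleton_apply] at hb ⊢
  by_contra hbx
  obtain ⟨c, hc⟩ := IsSimpleModule.toSpanSingleton_surjective A hbx (g x).1
  rw [toSpanSingleton_apply] at hc
  have hfix : compress e he (c * b) • g x = g x := Subtype.ext (by
    rw [compress_smul_val, mul_smul, hc, (g x).2])
  have hkill : compress e he (c * b) • x = 0 := Subtype.ext (by
    rw [compress_smul_val, mul_smul, hb, smul_zero, smul_zero]; rfl)
  exact hx (by rw [← hfix, ← map_smul, hkill, map_zero])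

theorem nonempty_linearEquiv_of_linearEquiv [IsSimpleModule A M] [IsSimpleModule A N]
    (hM : ∃ m : M, e • m ≠ 0) (f : eMod e he M ≃ₗ[Corner e he] eMod e he N) :
    Nonempty (M ≃ₗ[A] N) := by
  obtain ⟨m, hm⟩ := hM
  have hx : proj e he m ≠ 0 := proj_ne_zero hm
  have hfx : f (proj e he m) ≠ 0 := f.map_ne_zero_iff.mpr hx
  have hle := ker_toSpanSingleton_le f.symm.toLinearMap (x := f (proj e he m))
    (by simpa using hx)
  simp only [LinearEquiv.coe_coe, LinearEquiv.symm_apply_apply] at hle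
  exact IsSimpleModule.nonempty_linearEquiv_of_ker_toSpanSingleton_eq (val_ne_zero hx)
    (val_ne_zero hfx) ((ker_toSpanSingleton_le f.toLinearMap hfx).antisymm hle)

end eMod

namespace Corner

variable {A : Type*} [Ring A] {e : A} {he : e * e = e}
variable {T : Type*} [AddCommGroup T] [Module (Corner e he) T]

variable (e he) in
def annIdeal (t : T) : Submodule A A where
  carrier := {a | ∀ b : A, compress e he (b * a) • t = 0}
  add_mem' ha hb c := by rw [mul_add, map_add, add_smul, ha c, hb c, add_zero]
  zero_mem' c := by rw [mul_zero, map_zero, zero_smul]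
  smul_mem' a _ hb c := by rw [smul_eq_mul, ← mul_assoc]; exact hb (c * a)

theorem mem_annIdeal {t : T} {a : A} :
    a ∈ annIdeal e he t ↔ ∀ b : A, compress e he (b * a) • t = 0 := Iff.rfl

theorem val_mem_annIdeal_iff {t : T} (c : Corner e he) :
    c.1 ∈ annIdeal e he t ↔ c • t = 0 := by
  refine ⟨fun h => ?_, fun h b => ?_⟩
  · simpa only [one_mul, compress_val_eq] using h 1
  · rw [compress_mul_val, mul_smul, h, smul_zero]

theorem sub_mul_val_mem_annIdeal {t : T} (a : A) {w : Corner e he} (hw : w • t = t) :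
    a - a * w.1 ∈ annIdeal e he t := fun b => by
  rw [mul_sub, ← mul_assoc, map_sub, compress_mul_val, sub_smul, mul_smul, hw, sub_self]

theorem idem_notMem_annIdeal {t : T} (ht : t ≠ 0) : e ∉ annIdeal e he t :=
  (val_mem_annIdeal_iff (1 : Corner e he)).not.mpr (by rwa [one_smul])

theorem isSimpleModule_quotient_annIdeal [IsSimpleModule (Corner e he) T] {t : T}
    (ht : t ≠ 0) : IsSimpleModule A (A ⧸ annIdeal e he t) := by
  refine isSimpleModule_iff_toSpanSingleton_surjective.mpr
    ⟨⟨_, 0, (Submodule.Quotient.mk_eq_zero _).not.mpr (idem_notMem_annIdeal ht)⟩,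
      fun n hn => ?_⟩
  induction n using Submodule.Quotient.induction_on with | H a => ?_
  obtain ⟨b, hb⟩ : ∃ b, compress e he (b * a) • t ≠ 0 := by
    simpa [mem_annIdeal] using (Submodule.Quotient.mk_eq_zero _).not.mp hn
  obtain ⟨c, hc⟩ := IsSimpleModule.toSpanSingleton_surjective (Corner e he) hb t
  rw [toSpanSingleton_apply, ← mul_smul] at hc
  -- `w = c (ebae)` fixes `t`, so modulo the ideal `x ≡ x w = (x c e b) (a e) ≡ (x c e b) a`
  have hmk (x : A) : Submodule.Quotient.mk x =
      (x * c.1 * e * b) • (Submodule.Quotient.mk a : A ⧸ annIdeal e he t) := by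
    rw [← Submodule.Quotient.mk_smul, Submodule.Quotient.eq, smul_eq_mul,
      ← sub_sub_sub_cancel_right _ _ (x * (c * compress e he (b * a)).1)]
    refine Submodule.sub_mem _ (sub_mul_val_mem_annIdeal x hc) ?_
    have hxw : x * (c * compress e he (b * a)).1 =
        x * c.1 * e * b * a * (1 : Corner e he).1 := by
      simp only [mul_val, compress_val, one_val, mul_assoc]
    rw [hxw]
    exact sub_mul_val_mem_annIdeal _ (one_smul _ t)
  intro z
  induction z using Submodule.Quotient.induction_on with | H x => exact ⟨_, (hmk x).symm⟩

theorem idem_smul_mk_one_ne_zero {t : T} (ht : t ≠ 0) :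
    e • (Submodule.Quotient.mk 1 : A ⧸ annIdeal e he t) ≠ 0 := by
  rw [← Submodule.Quotient.mk_smul, smul_eq_mul, mul_one, Ne, Submodule.Quotient.mk_eq_zero]
  exact idem_notMem_annIdeal ht

theorem ker_toSpanSingleton_proj_mk_one (t : T) :
    ker (toSpanSingleton (Corner e he) _
      (eMod.proj e he (Submodule.Quotient.mk 1 : A ⧸ annIdeal e he t))) =
    ker (toSpanSingleton (Corner e he) T t) := by
  ext c
  have hc : (c • eMod.proj e he (Submodule.Quotient.mk 1 : A ⧸ annIdeal e he t)).1 =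
      Submodule.Quotient.mk c.1 := by
    rw [eMod.smul_val, eMod.proj_val, smul_smul, ← Submodule.Quotient.mk_smul, smul_eq_mul,
      mul_one, c.2.2]
  rw [mem_ker, mem_ker, toSpanSingleton_apply, toSpanSingleton_apply,
    ← val_mem_annIdeal_iff (t := t), ← Submodule.Quotient.mk_eq_zero, ← hc]
  exact Subtype.ext_iff

end Corner

theorem Corner.nonempty_simpleModuleRep {A T : Type u} [Ring A] {e : A} {he : e * e = e}
    [AddCommGroup T] [Module (Corner e he) T] [IsSimpleModule (Corner e he) T] :
    Nonempty (SimpleModuleRep A e he T) := by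
  have := IsSimpleModule.nontrivial (Corner e he) T
  obtain ⟨t, ht⟩ := exists_ne (0 : T)
  have hm := idem_smul_mk_one_ne_zero (he := he) ht
  have := isSimpleModule_quotient_annIdeal (he := he) ht
  have := eMod.isSimpleModule (he := he) ⟨_, hm⟩
  exact ⟨⟨A ⧸ annIdeal e he t, ‹_›, ⟨_, hm⟩,
    IsSimpleModule.nonempty_linearEquiv_of_ker_toSpanSingleton_eq (eMod.proj_ne_zero hm) ht
      (ker_toSpanSingleton_proj_mk_one t)⟩⟩

/-- Let `A` be a unital ring and `e ∈ A` an idempotent.  The assignment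
`S ↦ eS` gives a bijection between isomorphism classes of simple left `A`-modules `S` with
`eS ≠ 0` and isomorphism classes of simple left `eAe`-modules:  (1) for such `S`, `eS` is a
simple `eAe`-module; (2) every simple `eAe`-module arises as `eS` up to isomorphism
(surjectivity); (3) `S` is determined up to isomorphism by `eS` (injectivity). -/
theorem stmt18 {A : Type u} [Ring A] (e : A) (he : e * e = e) :
    (∀ (S : Type u) [AddCommGroup S] [Module A S], IsSimpleModule A S →
      (∃ m : S, e • m ≠ 0) → IsSimpleModule (Corner e he) (eMod e he S)) ∧
    (∀ (T : Type u) [AddCommGroup T] [Module (Corner e he) T],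
      IsSimpleModule (Corner e he) T → Nonempty (SimpleModuleRep A e he T)) ∧
    (∀ (S S' : Type u) [AddCommGroup S] [Module A S] [AddCommGroup S'] [Module A S'],
      IsSimpleModule A S → IsSimpleModule A S' →
      (∃ m : S, e • m ≠ 0) → (∃ m : S', e • m ≠ 0) →
      Nonempty (eMod e he S ≃ₗ[Corner e he] eMod e he S') →
      Nonempty (S ≃ₗ[A] S')) :=
  ⟨fun _ _ _ _ hS => eMod.isSimpleModule hS,
    fun _ _ _ _ => Corner.nonempty_simpleModuleRep,
    fun _ _ _ _ _ _ _ _ hS _ ⟨f⟩ => eMod.nonempty_linearEquiv_of_linearEquiv hS f⟩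
end
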